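/- Let G and H be non-trivial graphs where G has a universal vertex and H is not complete. Then tn(G ∘ H) ≤ 4. -/

import Mathlib

open SimpleGraph

/-- A walk `W` between `u` and `v` is a *tolled walk* if either `u = v` and `W` is trivial,
or `u` and `v` are adjacent and `W` is the single-edge walk, or `u ≠ v` are non-adjacent,
`W` has at least one interior vertex, `u` is adjacent exactly to the interior vertex
at position 1 and `v` exactly to the interior vertex at position `W.length - 1`. -/
def IsTolledWalk {V : Type*} (G : SimpleGraph V) {u v : V} (W : G.Walk u v) : Prop :=
  (u = v ∧ W.length = 0) ∨
  (G.Adj u v ∧ W.support = [u, v]) ∨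
  (¬ G.Adj u v ∧ u ≠ v ∧ 2 ≤ W.length ∧
    (∀ i, 0 < i → i < W.length → (G.Adj u (W.support.getD i u) ↔ i = 1)) ∧
    (∀ i, 0 < i → i < W.length → (G.Adj v (W.support.getD i u) ↔ i = W.length - 1)))

/-- The toll interval between `u` and `v`: vertices lying on some tolled walk. -/
def tollInterval {V : Type*} (G : SimpleGraph V) (u v : V) : Set V :=
  {x | ∃ W : G.Walk u v, IsTolledWalk G W ∧ x ∈ W.support}

/-- A toll set: the toll intervals between its pairs cover the vertex set. -/
def IsTollSet {V : Type*} (G : SimpleGraph V) (S : Set V) : Prop :=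
  ∀ x : V, ∃ u ∈ S, ∃ v ∈ S, x ∈ tollInterval G u v

/-- The toll number: minimum size of a toll set. -/
noncomputable def tollNumber {V : Type*} (G : SimpleGraph V) : ℕ :=
  sInf {n | ∃ S : Set V, S.Finite ∧ S.ncard = n ∧ IsTollSet G S}

/-- `v` is a cut vertex if deleting it disconnects the graph. -/
def IsCutVertex {V : Type*} (G : SimpleGraph V) (v : V) : Prop :=
  ¬ (G.induce {w | w ≠ v}).Preconnected

/-- The extreme vertices of `G` with respect to toll convexity. -/
def extremeVertices {V : Type*} (G : SimpleGraph V) : Set V :=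
  {s | ∀ x y : V, x ≠ s → y ≠ s → s ∉ tollInterval G x y}

/-- The lexicographic product of simple graphs. -/
def lexProd {V W : Type*} (G : SimpleGraph V) (H : SimpleGraph W) : SimpleGraph (V × W) where
  Adj a b := G.Adj a.1 b.1 ∨ (a.1 = b.1 ∧ H.Adj a.2 b.2)
  symm := by
    constructor
    rintro a b (h | ⟨h1, h2⟩)
    · exact Or.inl h.symm
    · exact Or.inr ⟨h1.symm, h2.symm⟩
  loopless := by
    constructor
    rintro a (h | ⟨_, h⟩)
    · exact G.ne_of_adj h rfl
    · exact H.ne_of_adj h rfl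

/-! A universal vertex `g` of `G` and a non-edge `h₁h₂` of `H` give the toll set
`{g, g'} × {h₁, h₂}`, for any `g' ≠ g`: `(c, h₁)` and `(c, h₂)` are non-adjacent, and every vertex
whose first coordinate is adjacent to `c` is a common neighbour of both, hence the middle vertex of
a tolled walk of length two. Vertices over `g'` are covered with `c = g`, all others with `c = g'`. -/

theorem tollNumber_le_ncard {V : Type*} {G : SimpleGraph V} {S : Set V} (hS : S.Finite)
    (hG : IsTollSet G S) : tollNumber G ≤ S.ncard :=
  Nat.sInf_le ⟨S, hS, rfl, hG⟩

theorem isTolledWalk_cons_cons_nil {V : Type*} {G : SimpleGraph V} {u x v : V}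
    (hux : G.Adj u x) (hxv : G.Adj x v) (huv : ¬ G.Adj u v) (hne : u ≠ v) :
    IsTolledWalk G (.cons hux (.cons hxv .nil)) := by
  have only_one : ∀ i, 0 < i → i < 2 → i = 1 := by omega
  refine .inr (.inr ⟨huv, hne, le_rfl, fun i hi hi2 => ?_, fun i hi hi2 => ?_⟩) <;>
    obtain rfl := only_one i hi hi2
  · simpa using hux
  · simpa using hxv.symm

theorem mem_tollInterval_of_adj_of_adj {V : Type*} {G : SimpleGraph V} {u x v : V}
    (hux : G.Adj u x) (hxv : G.Adj x v) (huv : ¬ G.Adj u v) (hne : u ≠ v) :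
    x ∈ tollInterval G u v :=
  ⟨_, isTolledWalk_cons_cons_nil hux hxv huv hne, by simp⟩

namespace lexProd

variable {V W : Type*} {G : SimpleGraph V} {H : SimpleGraph W}

theorem adj_of_adj_fst {a b : V × W} (h : G.Adj a.1 b.1) : (lexProd G H).Adj a b :=
  .inl h

theorem not_adj_of_eq_fst {c : V} {h₁ h₂ : W} (h : ¬ H.Adj h₁ h₂) :
    ¬ (lexProd G H).Adj (c, h₁) (c, h₂) := by
  rintro (hG | ⟨-, hH⟩)
  · exact G.ne_of_adj hG rfl
  · exact h hH

theorem mem_tollInterval_of_adj_fst {c : V} {h₁ h₂ : W} (hne : h₁ ≠ h₂) (hnadj : ¬ H.Adj h₁ h₂)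
    {x : V × W} (hx : G.Adj x.1 c) :
    x ∈ tollInterval (lexProd G H) (c, h₁) (c, h₂) :=
  mem_tollInterval_of_adj_of_adj (adj_of_adj_fst hx.symm) (adj_of_adj_fst hx)
    (not_adj_of_eq_fst hnadj) (by simpa using hne)

end lexProd

theorem stmt11_general {V W : Type*} [Nontrivial V]
    (G : SimpleGraph V) (H : SimpleGraph W)
    (huniv : ∃ g : V, ∀ w : V, w ≠ g → G.Adj g w) (hH : H ≠ ⊤) :
    tollNumber (lexProd G H) ≤ 4 := by
  classical
  obtain ⟨g, hg⟩ := huniv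
  obtain ⟨g', hg'⟩ := exists_ne g
  obtain ⟨h₁, h₂, hne, hnadj⟩ := ne_top_iff_exists_not_adj.mp hH
  let S : Finset (V × W) := {(g, h₁), (g, h₂), (g', h₁), (g', h₂)}
  have hS : IsTollSet (lexProd G H) S := by
    intro x
    by_cases hx : x.1 = g
    · exact ⟨(g', h₁), by simp [S], (g', h₂), by simp [S],
        lexProd.mem_tollInterval_of_adj_fst hne hnadj (hx ▸ hg g' hg')⟩
    · exact ⟨(g, h₁), by simp [S], (g, h₂), by simp [S],
        lexProd.mem_tollInterval_of_adj_fst hne hnadj (hg x.1 hx).symm⟩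
  calc tollNumber (lexProd G H) ≤ (S : Set (V × W)).ncard := tollNumber_le_ncard S.finite_toSet hS
    _ = S.card := Set.ncard_coe_finset S
    _ ≤ 4 := Finset.card_le_four

theorem stmt11 {V W : Type*} [Fintype V] [Fintype W] [Nontrivial V] [Nontrivial W]
    (G : SimpleGraph V) (H : SimpleGraph W)
    (huniv : ∃ g : V, ∀ w : V, w ≠ g → G.Adj g w) (hH : H ≠ ⊤) :
    tollNumber (lexProd G H) ≤ 4 :=
  stmt11_general G H huniv hH
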